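/- arXiv:1511.07542 — 2 statements merged into one kernel-verified Lean document; each statement's English description precedes it below -/
import Mathlib

section
/- Let F be a field, let k ≤ N be positive integers, and let A be a k × N matrix over F such that every k × k submatrix of A (obtained by selecting any k of its N columns) is invertible. Let S be a subset of the column index set {1,…,N} of size N − k, and let E be the (N−k) × N matrix whose rows are the distinct standard basis row vectors e_i for i ∈ S. Then the N × N matrix obtained by stacking A on top of E is invertible (full rank). -/
/-- Lemma 1 of the paper: stacking an MDS generator matrix `A` (every `k × k`
submatrix invertible) on top of `N - k` distinct standard basis row vectors
(indexed by a set `S` of columns of size `N - k`) yields an invertible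
(full rank) `N × N` matrix. -/
theorem stacked_mds_and_basis_rows_isUnit
    {F : Type*} [Field F] (k N : ℕ) (hk : 0 < k) (hkN : k ≤ N)
    (A : Matrix (Fin k) (Fin N) F)
    (hA : ∀ g : Fin k → Fin N, Function.Injective g → IsUnit (A.submatrix id g))
    (S : Finset (Fin N)) (hS : S.card = N - k)
    (e : Fin (N - k) → Fin N) (he : Function.Injective e) (heS : ∀ i, e i ∈ S)
    (E : Matrix (Fin (N - k)) (Fin N) F) (hE : ∀ i, E i = Pi.single (e i) (1 : F)) :
    IsUnit ((Matrix.fromRows A E).submatrix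
      (fun i : Fin N => finSumFinEquiv.symm (Fin.cast (Nat.add_sub_cancel' hkN).symm i))
      id) := by
  set φe : Fin N ≃ Fin k ⊕ Fin (N - k) :=
    (finCongr (Nat.add_sub_cancel' hkN).symm).trans finSumFinEquiv.symm with hφe
  set M := ((Matrix.fromRows A E).submatrix
      (fun i : Fin N => finSumFinEquiv.symm (Fin.cast (Nat.add_sub_cancel' hkN).symm i))
      id) with hM
  have hMφ : ∀ i j, M i j = Matrix.fromRows A E (φe i) j := fun i j => rfl
  rw [Matrix.isUnit_iff_isUnit_det, isUnit_iff_ne_zero]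
  intro hdet
  obtain ⟨v, hv0, hv⟩ := Matrix.exists_mulVec_eq_zero_iff.mpr hdet
  -- v vanishes on S
  have hsurj : ∀ x ∈ S, ∃ b, e b = x := by
    intro x hx
    have he' : Function.Injective (fun b : Fin (N - k) => (⟨e b, heS b⟩ : S)) := by
      intro a b hab
      exact he (congrArg Subtype.val hab)
    have hcard : Fintype.card (Fin (N - k)) = Fintype.card S := by
      simp [hS]
    have hsurj' := (Fintype.bijective_iff_injective_and_card _).mpr ⟨he', hcard⟩ |>.2
    obtain ⟨b, hb⟩ := hsurj' ⟨x, hx⟩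
    exact ⟨b, congrArg Subtype.val hb⟩
  have hvS : ∀ x ∈ S, v x = 0 := by
    intro x hx
    obtain ⟨b, hb⟩ := hsurj x hx
    have h1 := congrFun hv (φe.symm (Sum.inr b))
    have h2 : ∀ j, M (φe.symm (Sum.inr b)) j = E b j := by
      intro j
      rw [hMφ, Equiv.apply_symm_apply]
      rfl
    rw [Matrix.mulVec, dotProduct] at h1
    simp only [h2, hE, Pi.single_apply, Pi.zero_apply] at h1
    rw [← hb]
    simpa [ite_mul, Finset.sum_ite_eq'] using h1
  -- complement
  have hT : Sᶜ.card = k := by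
    rw [Finset.card_compl, hS, Fintype.card_fin]; omega
  let g : Fin k → Fin N := fun a => ((Sᶜ.equivFin.symm (Fin.cast hT.symm a)) : Fin N)
  have hg : Function.Injective g := by
    intro a b hab
    have := Sᶜ.equivFin.symm.injective (Subtype.val_injective hab)
    exact Fin.ext (by simpa using congrArg Fin.val this)
  have hgc : ∀ a, g a ∈ Sᶜ := fun a => (Sᶜ.equivFin.symm (Fin.cast hT.symm a)).2
  have hB := hA g hg
  have hBv : (A.submatrix id g).mulVec (v ∘ g) = 0 := by
    funext a
    have h1 := congrFun hv (φe.symm (Sum.inl a))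
    have h2 : ∀ j, M (φe.symm (Sum.inl a)) j = A a j := by
      intro j
      rw [hMφ, Equiv.apply_symm_apply]
      rfl
    rw [Matrix.mulVec, dotProduct] at h1
    simp only [h2] at h1
    -- ∑ j, A a j * v j = ∑ j ∈ Sᶜ, A a j * v j
    have h3 : ∑ j, A a j * v j = ∑ j ∈ Sᶜ, A a j * v j := by
      rw [eq_comm]
      apply Finset.sum_subset (Finset.subset_univ _)
      intro x _ hx
      rw [hvS x (by simpa using hx), mul_zero]
    -- reindex
    have h4 : ∑ j ∈ Sᶜ, A a j * v j = ∑ b : Fin k, A a (g b) * v (g b) := by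
      rw [← Finset.sum_attach Sᶜ (fun j => A a j * v j)]
      exact (Fintype.sum_equiv ((finCongr hT.symm).trans Sᶜ.equivFin.symm) _ _
        (fun b => by simp [g, finCongr])).symm
    simp only [Pi.zero_apply] at h1
    simp only [Matrix.mulVec, dotProduct, Matrix.submatrix_apply, id, Pi.zero_apply,
      Function.comp]
    rw [← h4, ← h3, h1]
  have hvg : v ∘ g = 0 := by
    have := Matrix.mulVec_injective_iff_isUnit.mpr hB
    have h0 : (A.submatrix id g).mulVec 0 = 0 := by simp
    exact this (hBv.trans h0.symm)
  apply hv0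
  funext x
  by_cases hx : x ∈ S
  · exact hvS x hx
  · obtain ⟨b, hb⟩ : ∃ b, g b = x := by
      have hsurjg : Function.Surjective (fun b : Fin k => (⟨g b, hgc b⟩ : (Sᶜ : Finset (Fin N)))) := by
        apply (Fintype.bijective_iff_injective_and_card _).mpr ⟨?_, by simp only [Fintype.card_fin, Fintype.card_coe, hT]⟩ |>.2
        intro a b hab
        exact hg (congrArg Subtype.val hab)
      obtain ⟨b, hb⟩ := hsurjg ⟨x, by simpa using hx⟩
      exact ⟨b, congrArg Subtype.val hb⟩
    rw [← hb]
    exact congrFun hvg b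
end

section
/- Let V be a finite set of vertices and Adj an irreflexive directed adjacency relation on V. Let c : V → ℕ be a proper coloring of the undirected version of the graph, i.e., whenever Adj u v or Adj v u we have c(u) ≠ c(v). Let k be the maximum over v ∈ V of the number of distinct colors appearing in the closed out-neighborhood {v} ∪ {u : Adj v u}. Let F be a field with at least as many elements as the total number of colors used by c. Then there exists an assignment of coding vectors g : V → F^k such that for every vertex v, g(v) does not lie in the F-linear span of { g(u) : Adj v u }. -/
/-- Vandermonde vectors `(1, t, t², …)` over a finite set `T` of field elements,
with `|T| ≤ k`, are linearly independent in `Fin k → F`. -/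
lemma vandermonde_vectors_linearIndependent {F : Type*} [Field F]
    (k : ℕ) (T : Finset F) (hT : T.card ≤ k) :
    LinearIndependent F (fun t : {x // x ∈ T} => (fun i : Fin k => (t : F) ^ (i : ℕ))) := by
  classical
  set e := T.equivFin with he
  let w : Fin T.card → F := fun i => (e.symm i : F)
  have hw : Function.Injective w := fun i j h => e.symm.injective (Subtype.ext h)
  have hdet : (Matrix.vandermonde w).det ≠ 0 := by
    rw [Matrix.det_vandermonde_ne_zero_iff]; exact hw
  have hLI : LinearIndependent F (fun i => Matrix.vandermonde w i) :=
    Matrix.linearIndependent_rows_iff_isUnit.mpr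
      ((Matrix.isUnit_iff_isUnit_det _).mpr (isUnit_iff_ne_zero.mpr hdet))
  let π : (Fin k → F) →ₗ[F] (Fin T.card → F) := LinearMap.funLeft F F (Fin.castLE hT)
  have hcomp : LinearIndependent F
      (π ∘ fun t : {x // x ∈ T} => (fun i : Fin k => (t : F) ^ (i : ℕ))) := by
    have h2 : LinearIndependent F ((fun i => Matrix.vandermonde w i) ∘ e) :=
      hLI.comp e e.injective
    convert h2 using 1
    funext t
    funext j
    simp [π, Matrix.vandermonde, w, LinearMap.funLeft, Fin.castLE]
  exact LinearIndependent.of_comp π hcomp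

/-- Core of the local chromatic index coding (LCIC) construction: given a
proper coloring `c` of the undirected version of a directed conflict graph,
with `k` the maximum number of distinct colors in any closed out-neighborhood,
and a field `F` with at least as many elements as the number of colors used,
one can assign coding vectors `g v ∈ F^k` so that each `g v` lies outside the
span of the coding vectors of the out-neighbors (interfering packets) of `v`. -/
theorem local_coloring_coding_vectors_exist
    {V F : Type*} [Fintype V] [DecidableEq V] [Field F]
    (Adj : V → V → Prop) [DecidableRel Adj] (hirr : ∀ v, ¬ Adj v v)
    (c : V → ℕ)
    (hc : ∀ u v : V, (Adj u v ∨ Adj v u) → c u ≠ c v)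
    (k : ℕ)
    (hk : k = Finset.univ.sup
      (fun v : V => ((insert v (Finset.univ.filter (fun u => Adj v u))).image c).card))
    (hF : (((Finset.univ.image c).card : ℕ) : Cardinal) ≤ Cardinal.mk F) :
    ∃ g : V → (Fin k → F), ∀ v : V,
      g v ∉ Submodule.span F (g '' {u : V | Adj v u}) := by
  classical
  set S : Finset ℕ := Finset.univ.image c with hS
  -- an embedding of `Fin S.card` into `F`
  have hemb : Nonempty (Fin S.card ↪ F) := by
    have hF' : Cardinal.lift.{u_2} (Cardinal.mk (Fin S.card)) ≤
        Cardinal.lift.{0} (Cardinal.mk F) := by simpa using hF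
    exact Cardinal.lift_mk_le'.mp hF'
  obtain ⟨emb⟩ := hemb
  -- map colors to distinct field elements
  let ψ : ℕ → F := fun n => if h : n ∈ S then emb (S.equivFin ⟨n, h⟩) else 0
  have hψ : ∀ n m : ℕ, n ∈ S → m ∈ S → ψ n = ψ m → n = m := by
    intro n m hn hm h
    simp only [ψ, dif_pos hn, dif_pos hm] at h
    have := S.equivFin.injective (emb.injective h)
    exact Subtype.ext_iff.mp this
  refine ⟨fun v => fun i => ψ (c v) ^ (i : ℕ), fun v => ?_⟩
  set N : Finset V := insert v (Finset.univ.filter (fun u => Adj v u)) with hN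
  set T : Finset F := (N.image c).image ψ with hT
  have hTk : T.card ≤ k := by
    calc T.card ≤ (N.image c).card := Finset.card_image_le
    _ ≤ k := hk ▸ Finset.le_sup
      (f := fun v : V => ((insert v (Finset.univ.filter (fun u => Adj v u))).image c).card)
      (Finset.mem_univ v)
  have hLI := vandermonde_vectors_linearIndependent k T hTk
  have hcvS : ∀ u : V, c u ∈ S := fun u => Finset.mem_image_of_mem c (Finset.mem_univ u)
  have htv : ψ (c v) ∈ T := by
    apply Finset.mem_image_of_mem
    exact Finset.mem_image_of_mem c (Finset.mem_insert_self v _)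
  have hnot := hLI.notMem_span_image (s := {t : {x // x ∈ T} | (t : F) ≠ ψ (c v)})
    (x := ⟨ψ (c v), htv⟩) (by simp)
  intro hmem
  apply hnot
  refine Submodule.span_mono ?_ hmem
  rintro _ ⟨u, hu, rfl⟩
  have hu' : Adj v u := hu
  have hcu : ψ (c u) ∈ T := by
    apply Finset.mem_image_of_mem
    apply Finset.mem_image_of_mem
    exact Finset.mem_insert_of_mem (Finset.mem_filter.mpr ⟨Finset.mem_univ u, hu'⟩)
  have hne : ψ (c u) ≠ ψ (c v) := fun h =>
    hc u v (Or.inr hu') (hψ _ _ (hcvS u) (hcvS v) h)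
  exact ⟨⟨ψ (c u), hcu⟩, hne, rfl⟩
end
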